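/- arXiv:2501.00770 — 4 statements merged into one kernel-verified Lean document; each statement's English description precedes it below -/
import Mathlib

section
/- Let A be a finite aperiodic semigroup and S a finite semigroup. The projection homomorphism from the wreath product A ≀ S onto S is an aperiodic morphism, i.e., it is injective on every subgroup of A ≀ S. -/
/-- Iterated power in a semigroup: `spow x n = x^(n+1)`. -/
def spow {S : Type*} [Semigroup S] (x : S) : ℕ → S
  | 0 => x
  | n + 1 => spow x n * x

/-- The wreath product `A ≀ S`: underlying set `A^(S¹) × S`. -/
def Wr (A S : Type*) := (WithOne S → A) × S

instance {A S : Type*} [Semigroup A] [Semigroup S] : Semigroup (Wr A S) where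
  mul p q := (fun x => p.1 x * q.1 (x * (p.2 : WithOne S)), p.2 * q.2)
  mul_assoc p q r := by
    refine Prod.ext ?_ (mul_assoc _ _ _)
    funext x
    show (p.1 x * q.1 (x * (p.2 : WithOne S))) *
        r.1 (x * ((p.2 * q.2 : S) : WithOne S)) =
      p.1 x * (q.1 (x * (p.2 : WithOne S)) *
        r.1 ((x * (p.2 : WithOne S)) * (q.2 : WithOne S)))
    rw [WithOne.coe_mul, ← mul_assoc, mul_assoc (p.1 x)]

/-- The projection of the wreath product onto the second factor. -/
def wrProj {A S : Type*} [Semigroup A] [Semigroup S] : Wr A S →ₙ* S where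
  toFun p := p.2
  map_mul' _ _ := rfl

/-- A subset `G` of a semigroup is a subgroup if it is a nonempty subsemigroup
containing an identity element for `G` and inverses. -/
def IsSubgroupSet {S : Type*} [Semigroup S] (G : Set S) : Prop :=
  G.Nonempty ∧ (∀ a ∈ G, ∀ b ∈ G, a * b ∈ G) ∧
    ∃ e ∈ G, (∀ x ∈ G, e * x = x ∧ x * e = x) ∧
      ∀ x ∈ G, ∃ y ∈ G, x * y = e ∧ y * x = e

/-!
Let `G` be a subgroup of `A ≀ S` with identity `e`. If `g, h ∈ G` have the same image in `S`,
then `k = g h⁻¹` has the same image as `e`, so its `S`-component `s` is idempotent and its powers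
are `k^(n+1) = (x ↦ f(x) · f(x s)^n, s)`. Since `A` is finite and aperiodic it satisfies
`a^N = a^(N+1)` for a uniform `N`, so the powers of `k` stabilize; in a group this forces `k = e`,
that is `g = h`.
-/

section Aperiodic

variable {A : Type*} [Semigroup A]

lemma spow_eq_spow_succ_of_le {a : A} {n m : ℕ} (h : spow a n = spow a (n + 1)) (hnm : n ≤ m) :
    spow a m = spow a (m + 1) := by
  induction m, hnm using Nat.le_induction with
  | base => exact h
  | succ m _ ih => exact congrArg (· * a) ih

lemma exists_forall_spow_eq_spow_succ [Finite A] (hA : ∀ a : A, ∃ n : ℕ, spow a n = spow a (n + 1)) :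
    ∃ N : ℕ, ∀ a : A, spow a N = spow a (N + 1) := by
  choose f hf using hA
  obtain ⟨N, hN⟩ := (Set.finite_range f).bddAbove
  exact ⟨N, fun a => spow_eq_spow_succ_of_le (hf a) (hN ⟨a, rfl⟩)⟩

end Aperiodic

section SubgroupSet

variable {T : Type*} [Semigroup T] {G : Set T} {e : T}

lemma spow_mem (hmul : ∀ a ∈ G, ∀ b ∈ G, a * b ∈ G) {k : T} (hk : k ∈ G) (n : ℕ) :
    spow k n ∈ G := by
  induction n with
  | zero => exact hk
  | succ n ih => exact hmul _ ih _ hk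

lemma eq_of_spow_eq_spow_succ (hmul : ∀ a ∈ G, ∀ b ∈ G, a * b ∈ G)
    (hid : ∀ x ∈ G, e * x = x) (hinv : ∀ x ∈ G, ∃ y, y * x = e)
    {k : T} (hk : k ∈ G) {m : ℕ} (h : spow k m = spow k (m + 1)) : k = e := by
  obtain ⟨y, hy⟩ := hinv _ (spow_mem hmul hk m)
  calc k = y * spow k m * k := by rw [hy, hid k hk]
    _ = y * spow k (m + 1) := mul_assoc _ _ _
    _ = e := by rw [← h, hy]

lemma injOn_of_forall_map_eq_map_imp_eq {U : Type*} [Semigroup U] (φ : T →ₙ* U)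
    (hmul : ∀ a ∈ G, ∀ b ∈ G, a * b ∈ G) (hid : ∀ x ∈ G, e * x = x ∧ x * e = x)
    (hinv : ∀ x ∈ G, ∃ y ∈ G, x * y = e ∧ y * x = e)
    (hker : ∀ k ∈ G, φ k = φ e → k = e) : Set.InjOn φ G := by
  intro g hg h hh hgh
  obtain ⟨h', hh', hhh', hh'h⟩ := hinv h hh
  have hgh' : g * h' = e := hker _ (hmul _ hg _ hh') (by rw [map_mul, hgh, ← map_mul, hhh'])
  calc g = g * (h' * h) := by rw [hh'h, (hid g hg).2]
    _ = h := by rw [← mul_assoc, hgh', (hid h hh).1]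

end SubgroupSet

namespace Wr

variable {A S : Type*} [Semigroup A] [Semigroup S]

@[simp]
lemma fst_mul (p q : Wr A S) (x : WithOne S) : (p * q).1 x = p.1 x * q.1 (x * (p.2 : WithOne S)) :=
  rfl

@[simp]
lemma snd_mul (p q : Wr A S) : (p * q).2 = p.2 * q.2 :=
  rfl

lemma snd_spow_of_mul_self {p : Wr A S} (hp : p.2 * p.2 = p.2) (n : ℕ) : (spow p n).2 = p.2 := by
  induction n with
  | zero => rfl
  | succ n ih => rw [spow, snd_mul, ih, hp]

lemma fst_spow_succ_of_mul_self {p : Wr A S} (hp : p.2 * p.2 = p.2) (n : ℕ) (x : WithOne S) :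
    (spow p (n + 1)).1 x = p.1 x * spow (p.1 (x * (p.2 : WithOne S))) n := by
  induction n with
  | zero => rfl
  | succ n ih => rw [spow, fst_mul, snd_spow_of_mul_self hp, ih, spow, mul_assoc]

lemma spow_succ_eq_spow_succ_succ_of_mul_self {N : ℕ} (hN : ∀ a : A, spow a N = spow a (N + 1))
    {p : Wr A S} (hp : p.2 * p.2 = p.2) : spow p (N + 1) = spow p (N + 2) := by
  refine Prod.ext (funext fun x => ?_) ?_
  · rw [fst_spow_succ_of_mul_self hp, fst_spow_succ_of_mul_self hp, hN]
  · rw [snd_spow_of_mul_self hp, snd_spow_of_mul_self hp]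

end Wr

theorem wreath_projection_aperiodic_general
    {A S : Type*} [Semigroup A] [Semigroup S] [Fintype A]
    (hA : ∀ a : A, ∃ n : ℕ, spow a n = spow a (n + 1)) :
    ∀ G : Set (Wr A S), IsSubgroupSet G → Set.InjOn (wrProj : Wr A S →ₙ* S) G := by
  obtain ⟨N, hN⟩ := exists_forall_spow_eq_spow_succ hA
  rintro G ⟨-, hmul, e, he, hid, hinv⟩
  refine injOn_of_forall_map_eq_map_imp_eq wrProj hmul hid hinv fun k hk hke => ?_
  have hk_idem : k.2 * k.2 = k.2 := by
    change k.2 = e.2 at hke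
    rw [hke, ← Wr.snd_mul, (hid e he).1]
  exact eq_of_spow_eq_spow_succ hmul (fun x hx => (hid x hx).1)
    (fun x hx => (hinv x hx).imp fun _ hy => hy.2.2) hk
    (Wr.spow_succ_eq_spow_succ_succ_of_mul_self hN hk_idem)

/-- If `A` is a finite aperiodic semigroup and `S` a finite semigroup, then the
projection `A ≀ S → S` is an aperiodic morphism: it is injective on every
subgroup of `A ≀ S`. -/
theorem wreath_projection_aperiodic
    {A S : Type*} [Semigroup A] [Semigroup S] [Fintype A] [Fintype S]
    (hA : ∀ a : A, ∃ n : ℕ, spow a n = spow a (n + 1)) :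
    ∀ G : Set (Wr A S), IsSubgroupSet G → Set.InjOn (wrProj : Wr A S →ₙ* S) G :=
  wreath_projection_aperiodic_general hA
end

section
/- Let S be a finite semigroup, let 𝓛 be the set of regular L-classes of S, and let S act partially on 𝓛 by L · s = Ls if Ls lies in the same D-class as L, and undefined otherwise. Then this is a well-defined action by partial functions, i.e., each s ∈ S induces a partial function on 𝓛 and the assignment is compatible with multiplication. -/
/-! `L` is a right congruence contained in `D`, and `D` is an equivalence because `L` and `R`
commute; this gives independence of the representative. Compatibility rests on stability of
finite semigroups: `a ≤_R c` and `a D c` imply `a R c`, since `c = v c w` forces `c = c w^(k+1)`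
once the powers of `v` repeat. So `x(st) D x` gives `x(st) R x`, and `xs`, lying between them
in the `R`-order, is `R`-equivalent to both. -/

section Green

variable {S : Type*} [Semigroup S]

/-- `x ∈ S¹ y`. -/
def lLe (x y : S) : Prop := x = y ∨ ∃ t, x = t * y

/-- Green's `L`-equivalence: `S¹x = S¹y`. -/
def LEquiv (x y : S) : Prop := lLe x y ∧ lLe y x

/-- `x ∈ y S¹`. -/
def rLe (x y : S) : Prop := x = y ∨ ∃ t, x = y * t

/-- Green's `R`-equivalence: `xS¹ = yS¹`. -/
def REquiv (x y : S) : Prop := rLe x y ∧ rLe y x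

/-- Green's `D`-equivalence: the composite `L ∘ R`. -/
def DEquiv (x y : S) : Prop := ∃ z, LEquiv x z ∧ REquiv z y

/-- `x` is a regular element. -/
def IsRegularElem (x : S) : Prop := ∃ y, x = x * y * x

end Green

theorem exists_eq_mul_pow_succ_of_eq_mul_mul {M : Type*} [Monoid M] [Finite M] {c v w : M}
    (h : c = v * c * w) : ∃ k : ℕ, c = c * w ^ (k + 1) := by
  have hpow (n : ℕ) : c = v ^ n * c * w ^ n := by
    induction n with
    | zero => simp
    | succ n ih =>
      calc c = v * (v ^ n * c * w ^ n) * w := by rw [← ih, ← h]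
        _ = v ^ (n + 1) * c * w ^ (n + 1) := by rw [pow_succ', pow_succ]; simp only [mul_assoc]
  obtain ⟨i, j, hij, hv⟩ :=
    Set.finite_univ.exists_lt_map_eq_of_forall_mem (f := fun n : ℕ ↦ v ^ n) fun _ ↦ Set.mem_univ _
  refine ⟨j - i - 1, ?_⟩
  calc c = v ^ i * c * w ^ j := by rw [hv]; exact hpow j
    _ = v ^ i * c * w ^ i * w ^ (j - i - 1 + 1) := by
      rw [mul_assoc _ (w ^ i), ← pow_add]; congr; omega
    _ = c * w ^ (j - i - 1 + 1) := by rw [← hpow i]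

section GreenRelations

variable {S : Type*} [Semigroup S] {a b c x x' y y' z : S}

theorem lLe_iff_exists_withOne : lLe x y ↔ ∃ t : WithOne S, (x : WithOne S) = t * y := by
  constructor
  · rintro (rfl | ⟨t, rfl⟩)
    · exact ⟨1, (one_mul _).symm⟩
    · exact ⟨t, WithOne.coe_mul t y⟩
  · rintro ⟨t, ht⟩
    induction t using WithOne.recOneCoe with
    | one => exact Or.inl (WithOne.coe_inj.mp (by rwa [one_mul] at ht))
    | coe t => exact Or.inr ⟨t, WithOne.coe_inj.mp ht⟩

theorem rLe_iff_exists_withOne : rLe x y ↔ ∃ t : WithOne S, (x : WithOne S) = y * t := by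
  constructor
  · rintro (rfl | ⟨t, rfl⟩)
    · exact ⟨1, (mul_one _).symm⟩
    · exact ⟨t, WithOne.coe_mul y t⟩
  · rintro ⟨t, ht⟩
    induction t using WithOne.recOneCoe with
    | one => exact Or.inl (WithOne.coe_inj.mp (by rwa [mul_one] at ht))
    | coe t => exact Or.inr ⟨t, WithOne.coe_inj.mp ht⟩

theorem lLe.refl (x : S) : lLe x x := Or.inl rfl

theorem rLe.refl (x : S) : rLe x x := Or.inl rfl

theorem lLe.trans (hxy : lLe x y) (hyz : lLe y z) : lLe x z := by
  rcases hxy with rfl | ⟨t, rfl⟩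
  · exact hyz
  rcases hyz with rfl | ⟨u, rfl⟩
  · exact Or.inr ⟨t, rfl⟩
  · exact Or.inr ⟨t * u, (mul_assoc t u z).symm⟩

theorem rLe.trans (hxy : rLe x y) (hyz : rLe y z) : rLe x z := by
  rcases hxy with rfl | ⟨t, rfl⟩
  · exact hyz
  rcases hyz with rfl | ⟨u, rfl⟩
  · exact Or.inr ⟨t, rfl⟩
  · exact Or.inr ⟨u * t, mul_assoc z u t⟩

theorem lLe.mul_right (h : lLe x y) (s : S) : lLe (x * s) (y * s) := by
  rcases h with rfl | ⟨t, rfl⟩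
  · exact Or.inl rfl
  · exact Or.inr ⟨t, mul_assoc t y s⟩

theorem rLe_mul_right (x s : S) : rLe (x * s) x := Or.inr ⟨s, rfl⟩

theorem LEquiv.refl (x : S) : LEquiv x x := ⟨lLe.refl x, lLe.refl x⟩

theorem LEquiv.symm (h : LEquiv x y) : LEquiv y x := ⟨h.2, h.1⟩

theorem LEquiv.trans (hxy : LEquiv x y) (hyz : LEquiv y z) : LEquiv x z :=
  ⟨hxy.1.trans hyz.1, hyz.2.trans hxy.2⟩

theorem LEquiv.mul_right (h : LEquiv x y) (s : S) : LEquiv (x * s) (y * s) :=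
  ⟨h.1.mul_right s, h.2.mul_right s⟩

theorem REquiv.refl (x : S) : REquiv x x := ⟨rLe.refl x, rLe.refl x⟩

theorem REquiv.symm (h : REquiv x y) : REquiv y x := ⟨h.2, h.1⟩

theorem REquiv.trans (hxy : REquiv x y) (hyz : REquiv y z) : REquiv x z :=
  ⟨hxy.1.trans hyz.1, hyz.2.trans hxy.2⟩

theorem REquiv.of_between (hac : REquiv a c) (hab : rLe a b) (hbc : rLe b c) :
    REquiv a b ∧ REquiv b c :=
  ⟨⟨hab, hbc.trans hac.2⟩, ⟨hbc, hac.2.trans hab⟩⟩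

theorem LEquiv.exists_REquiv_LEquiv (hab : LEquiv a b) (hbc : REquiv b c) :
    ∃ d, REquiv a d ∧ LEquiv d c := by
  rcases hbc.2 with rfl | ⟨p, rfl⟩
  · exact ⟨a, REquiv.refl a, hab⟩
  refine ⟨a * p, ⟨?_, rLe_mul_right a p⟩, hab.mul_right p⟩
  obtain ⟨u, hu⟩ := lLe_iff_exists_withOne.mp hab.1
  obtain ⟨q, hq⟩ := rLe_iff_exists_withOne.mp hbc.1
  refine rLe_iff_exists_withOne.mpr ⟨q, ?_⟩
  calc (a : WithOne S) = u * (↑(b * p) * q) := by rw [hu, ← hq]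
    _ = ↑(a * p) * q := by rw [WithOne.coe_mul, WithOne.coe_mul, hu]; simp only [mul_assoc]

theorem LEquiv.dEquiv (h : LEquiv x y) : DEquiv x y := ⟨y, h, REquiv.refl y⟩

theorem REquiv.dEquiv (h : REquiv x y) : DEquiv x y := ⟨x, LEquiv.refl x, h⟩

theorem DEquiv.symm (h : DEquiv x y) : DEquiv y x := by
  obtain ⟨z, hxz, hzy⟩ := h
  obtain ⟨d, hxd, hdy⟩ := hxz.exists_REquiv_LEquiv hzy
  exact ⟨d, hdy.symm, hxd.symm⟩

theorem DEquiv.trans (hxy : DEquiv x y) (hyz : DEquiv y z) : DEquiv x z := by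
  obtain ⟨u, hxu, huy⟩ := hxy
  obtain ⟨w, hyw, hwz⟩ := hyz
  obtain ⟨d, hwd, hdu⟩ := hyw.symm.exists_REquiv_LEquiv huy.symm
  exact ⟨d, hxu.trans hdu.symm, hwd.symm.trans hwz⟩

theorem dEquiv_congr_of_LEquiv (hx : LEquiv x x') (hy : LEquiv y y') :
    DEquiv x y ↔ DEquiv x' y' :=
  ⟨fun h ↦ (hx.symm.dEquiv.trans h).trans hy.dEquiv,
    fun h ↦ (hx.dEquiv.trans h).trans hy.symm.dEquiv⟩

theorem rEquiv_of_rLe_of_dEquiv [Finite S] (hle : rLe a c) (hD : DEquiv a c) : REquiv a c := by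
  rcases hle with rfl | ⟨t, rfl⟩
  · exact REquiv.refl a
  obtain ⟨z, haz, hzc⟩ := hD
  obtain ⟨v, hv⟩ := lLe_iff_exists_withOne.mp haz.2
  obtain ⟨q, hq⟩ := rLe_iff_exists_withOne.mp hzc.2
  have : Finite (WithOne S) := inferInstanceAs (Finite (Option S))
  have hc : (c : WithOne S) = v * c * (t * q) :=
    calc (c : WithOne S) = v * ↑(c * t) * q := by rw [hq, hv]
      _ = v * c * (t * q) := by rw [WithOne.coe_mul]; simp only [mul_assoc]
  obtain ⟨k, hk⟩ := exists_eq_mul_pow_succ_of_eq_mul_mul hc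
  refine ⟨rLe_mul_right c t, rLe_iff_exists_withOne.mpr ⟨q * (t * q) ^ k, ?_⟩⟩
  rw [hk, pow_succ', WithOne.coe_mul]
  simp only [mul_assoc]

end GreenRelations

/-- Let `S` be a finite semigroup acting on its regular `L`-classes by
`L · s = Ls` if `Ls` is in the same `D`-class as `L`, and undefined otherwise.
This is a well-defined action by partial functions: (1) for regular `x L y`,
whether `L_x · s` is defined does not depend on the representative, and when
defined the images `L_{xs}`, `L_{ys}` coincide (so each `s` induces a partial
function on the set of regular `L`-classes); (2) the partial function induced
by `s * t` is the composite of those induced by `s` and `t`. -/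
theorem action_on_L_classes_well_defined
    {S : Type*} [Semigroup S] [Fintype S] :
    (∀ x y s : S, IsRegularElem x → LEquiv x y →
      ((DEquiv (x * s) x ↔ DEquiv (y * s) y) ∧
        (DEquiv (x * s) x → LEquiv (x * s) (y * s)))) ∧
    (∀ x s t : S, IsRegularElem x →
      (DEquiv (x * (s * t)) x ↔
        (DEquiv (x * s) x ∧ DEquiv ((x * s) * t) (x * s)))) := by
  refine ⟨fun x y s _ hxy ↦ ⟨dEquiv_congr_of_LEquiv (hxy.mul_right s) hxy,
    fun _ ↦ hxy.mul_right s⟩, fun x s t _ ↦ ?_⟩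
  rw [← mul_assoc]
  constructor
  · intro h
    have hst := rLe_mul_right (x * s) t
    have hs := rLe_mul_right x s
    obtain ⟨hR₁, hR₂⟩ := (rEquiv_of_rLe_of_dEquiv (hst.trans hs) h).of_between hst hs
    exact ⟨hR₂.dEquiv, hR₁.dEquiv⟩
  · rintro ⟨hs, hst⟩
    exact hst.trans hs
end

section
/- The set of invariant cross-sections CS(G × B) is a meet-subsemilattice of the set-partition lattice SP(G × B), and it is isomorphic as a meet-semilattice to the meet-semilattice of the Rhodes lattice Rh_B(G) (with the contradiction element removed). -/
/-- A partial equivalence relation (PER): symmetric and transitive.  PERs on a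
set `α` correspond exactly to pairs `(Y, Π)` where `Y ⊆ α` (the domain
`{x | r x x}`) and `Π` is a partition of `Y` (the classes), and the order of
the set-partition lattice `SP(α)` (containment of domains plus refinement of
classes) corresponds to implication of relations. -/
def IsPER {α : Type*} (r : α → α → Prop) : Prop :=
  (∀ x y, r x y → r y x) ∧ (∀ x y z, r x y → r y z → r x z)

/-- The set-partition lattice `SP(G × B)`, encoded as PERs on `G × B` ordered
by implication. -/
def SPLattice (G B : Type*) := {r : G × B → G × B → Prop // IsPER r}

instance {G B : Type*} : PartialOrder (SPLattice G B) :=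
  PartialOrder.lift (fun r => r.1) Subtype.val_injective

/-- `(Y, Π)` is a cross-section: no class contains two distinct elements with
the same `B`-coordinate. -/
def IsCross {G B : Type*} (r : SPLattice G B) : Prop :=
  ∀ (g h : G) (b : B), r.1 (g, b) (h, b) → g = h

/-- `(Y, Π)` is invariant under the left `G`-action `g • (h, b) = (g h, b)`. -/
def GInvariant {G B : Type*} [Group G] (r : SPLattice G B) : Prop :=
  ∀ (k : G) (x y : G × B), r.1 x y → r.1 (k * x.1, x.2) (k * y.1, y.2)

/-- An SPC (Subset, Partition, Cross-section) of the Rhodes lattice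
`Rh_B(G)` (the contradiction element removed): a partial partition of `B`
(encoded as a PER) together with, for each class, a `G`-orbit of cross-section
functions to `G`, encoded by the well-defined ratio cocycle
`ρ b b' = f(b)⁻¹ f(b')`. -/
structure RhSPC (G B : Type*) [Group G] where
  per : B → B → Prop
  hper : IsPER per
  rho : B → B → G
  rho_mul : ∀ a b c : B, per a b → per b c → rho a b * rho b c = rho a c
  rho_dom : ∀ a b : B, ¬ per a b → rho a b = 1

/-- The order on `Rh_B(G)`: containment/refinement of the partial partitions
together with compatibility of the cross-sections. -/
def rhLe {G B : Type*} [Group G] (p q : RhSPC G B) : Prop :=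
  (∀ a b : B, p.per a b → q.per a b) ∧ (∀ a b : B, p.per a b → p.rho a b = q.rho a b)

/-!
An invariant cross-section `r` of `G × B` is determined by the classes through the points
`(1, b)`: by invariance `(g, b) ~ (h, b')` iff `(1, b) ~ (g⁻¹ h, b')`, and by the cross-section
property there is at most one such `g⁻¹ h`, the ratio `ρ b b'`. So `r` is the same as a partial
partition of `B` together with a cocycle `ρ` on its classes, i.e. an SPC of `Rh_B(G)`, and
`r ≤ s` becomes refinement of the partitions together with agreement of the cocycles.
Meets in `SP(G × B)` are pointwise conjunctions, which visibly preserve both properties.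
-/

namespace SPLattice

variable {G B : Type*}

instance : SemilatticeInf (SPLattice G B) where
  inf r s := ⟨fun x y => r.1 x y ∧ s.1 x y,
    fun x y h => ⟨r.2.1 x y h.1, s.2.1 x y h.2⟩,
    fun x y z hxy hyz => ⟨r.2.2 x y z hxy.1 hyz.1, s.2.2 x y z hxy.2 hyz.2⟩⟩
  inf_le_left _ _ _ _ h := h.1
  inf_le_right _ _ _ _ h := h.2
  le_inf _ _ _ hr hs x y h := ⟨hr x y h, hs x y h⟩

lemma _root_.IsCross.inf {r : SPLattice G B} (hr : IsCross r) (s : SPLattice G B) :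
    IsCross (r ⊓ s) :=
  fun g h b hgh => hr g h b hgh.1

lemma _root_.GInvariant.inf [Group G] {r s : SPLattice G B} (hr : GInvariant r)
    (hs : GInvariant s) : GInvariant (r ⊓ s) :=
  fun k x y hxy => ⟨hr k x y hxy.1, hs k x y hxy.2⟩

variable [Group G]

lemma _root_.GInvariant.rel_iff_rel_one {r : SPLattice G B} (hr : GInvariant r) {g h : G}
    {b b' : B} : r.1 (g, b) (h, b') ↔ r.1 (1, b) (g⁻¹ * h, b') :=
  ⟨fun hgh => by simpa using hr g⁻¹ _ _ hgh, fun hgh => by simpa using hr g _ _ hgh⟩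

/-- The partial partition of `B` induced by `r`, read off from the classes through `(1, b)`. -/
def projRel (r : SPLattice G B) (b b' : B) : Prop :=
  ∃ g : G, r.1 (1, b) (g, b')

open Classical in
/-- Set to `1` outside `projRel r`, as `RhSPC.rho_dom` demands. -/
noncomputable def ratio (r : SPLattice G B) (b b' : B) : G :=
  if h : r.projRel b b' then h.choose else 1

lemma rel_ratio {r : SPLattice G B} {b b' : B} (h : r.projRel b b') :
    r.1 (1, b) (r.ratio b b', b') := by
  rw [ratio, dif_pos h]
  exact h.choose_spec

lemma ratio_eq_of_rel {r : SPLattice G B} (hc : IsCross r) {b b' : B} {g : G}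
    (h : r.1 (1, b) (g, b')) : r.ratio b b' = g :=
  hc _ _ _ (r.2.2 _ _ _ (r.2.1 _ _ (rel_ratio ⟨g, h⟩)) h)

lemma rel_iff_eq_mul_ratio {r : SPLattice G B} (hc : IsCross r) (hi : GInvariant r)
    {g h : G} {b b' : B} :
    r.1 (g, b) (h, b') ↔ r.projRel b b' ∧ h = g * r.ratio b b' := by
  rw [hi.rel_iff_rel_one]
  constructor
  · intro hgh
    refine ⟨⟨_, hgh⟩, ?_⟩
    rw [ratio_eq_of_rel hc hgh, mul_inv_cancel_left]
  · rintro ⟨hp, rfl⟩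
    simpa using rel_ratio hp

noncomputable def toRhSPC (r : SPLattice G B) (hc : IsCross r) (hi : GInvariant r) :
    RhSPC G B where
  per := r.projRel
  hper :=
    ⟨fun _ _ ⟨g, hg⟩ => ⟨g⁻¹, by simpa using hi.rel_iff_rel_one.1 (r.2.1 _ _ hg)⟩,
     fun _ _ _ ⟨g, hg⟩ ⟨h, hh⟩ =>
      ⟨g * h, r.2.2 _ _ _ hg (hi.rel_iff_rel_one.2 (by simpa using hh))⟩⟩
  rho := r.ratio
  rho_mul a b c hab hbc := by
    have hbc' : r.1 (r.ratio a b, b) (r.ratio a b * r.ratio b c, c) :=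
      hi.rel_iff_rel_one.2 (by simpa using rel_ratio hbc)
    exact (ratio_eq_of_rel hc (r.2.2 _ _ _ (rel_ratio hab) hbc')).symm
  rho_dom a b hab := by rw [ratio, dif_neg hab]

end SPLattice

namespace RhSPC

variable {G B : Type*} [Group G]

attribute [ext] RhSPC

lemma per_refl_left (p : RhSPC G B) {b b' : B} (h : p.per b b') : p.per b b :=
  p.hper.2 _ _ _ h (p.hper.1 _ _ h)

lemma rho_self (p : RhSPC G B) {b : B} (h : p.per b b) : p.rho b b = 1 :=
  mul_eq_left.1 (p.rho_mul b b b h h)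

lemma rho_symm (p : RhSPC G B) {b b' : B} (h : p.per b b') :
    p.rho b' b = (p.rho b b')⁻¹ :=
  eq_inv_of_mul_eq_one_right <| by
    rw [p.rho_mul b b' b h (p.hper.1 _ _ h), p.rho_self (p.per_refl_left h)]

def toSP (p : RhSPC G B) : SPLattice G B :=
  ⟨fun x y => p.per x.2 y.2 ∧ y.1 = x.1 * p.rho x.2 y.2,
    fun _ _ ⟨hp, he⟩ => ⟨p.hper.1 _ _ hp, by rw [he, p.rho_symm hp, mul_inv_cancel_right]⟩,
    fun _ _ _ ⟨hp, he⟩ ⟨hp', he'⟩ =>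
      ⟨p.hper.2 _ _ _ hp hp', by rw [he', he, mul_assoc, p.rho_mul _ _ _ hp hp']⟩⟩

lemma isCross_toSP (p : RhSPC G B) : IsCross p.toSP := by
  rintro g h b ⟨hp, he⟩
  rw [show h = g * p.rho b b from he, p.rho_self hp, mul_one]

lemma gInvariant_toSP (p : RhSPC G B) : GInvariant p.toSP :=
  fun k _ _ ⟨hp, he⟩ => ⟨hp, by rw [he, mul_assoc]⟩

lemma projRel_toSP (p : RhSPC G B) : p.toSP.projRel = p.per := by
  ext b b'
  exact ⟨fun ⟨_, hp, _⟩ => hp, fun hp => ⟨p.rho b b', hp, (one_mul _).symm⟩⟩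

lemma ratio_toSP (p : RhSPC G B) : p.toSP.ratio = p.rho := by
  ext b b'
  by_cases hp : p.per b b'
  · exact SPLattice.ratio_eq_of_rel p.isCross_toSP ⟨hp, (one_mul _).symm⟩
  · rw [SPLattice.ratio, dif_neg (by rwa [projRel_toSP]), p.rho_dom _ _ hp]

lemma toSP_le_toSP_iff {p q : RhSPC G B} : p.toSP ≤ q.toSP ↔ rhLe p q := by
  constructor
  · intro hle
    have key : ∀ a b, p.per a b → q.per a b ∧ p.rho a b = 1 * q.rho a b :=
      fun a b hp => hle (1, a) (p.rho a b, b) ⟨hp, (one_mul _).symm⟩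
    exact ⟨fun a b hp => (key a b hp).1, fun a b hp => by rw [(key a b hp).2, one_mul]⟩
  · rintro ⟨hper, hrho⟩ x y ⟨hp, he⟩
    exact ⟨hper _ _ hp, by rw [he, hrho _ _ hp]⟩

end RhSPC

namespace SPLattice

variable {G B : Type*} [Group G]

noncomputable def invariantCrossSectionEquiv :
    {r : SPLattice G B // IsCross r ∧ GInvariant r} ≃ RhSPC G B where
  toFun x := x.1.toRhSPC x.2.1 x.2.2
  invFun p := ⟨p.toSP, p.isCross_toSP, p.gInvariant_toSP⟩
  left_inv x := by
    obtain ⟨r, hc, hi⟩ := x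
    refine Subtype.ext (Subtype.ext ?_)
    funext ⟨g, b⟩ ⟨h, b'⟩
    exact propext (rel_iff_eq_mul_ratio hc hi).symm
  right_inv p := RhSPC.ext p.projRel_toSP p.ratio_toSP

lemma toSP_invariantCrossSectionEquiv (x : {r : SPLattice G B // IsCross r ∧ GInvariant r}) :
    (invariantCrossSectionEquiv x).toSP = x.1 :=
  congrArg Subtype.val (invariantCrossSectionEquiv.left_inv x)

end SPLattice

theorem invariant_cross_sections_meet_subsemilattice_iso_Rhodes_general
    (G B : Type*) [Group G] :
    (∀ r s : SPLattice G B, ∃ m : SPLattice G B, IsGLB {r, s} m) ∧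
    (∀ r s m : SPLattice G B, IsCross r → GInvariant r → IsCross s →
      GInvariant s → IsGLB {r, s} m → IsCross m ∧ GInvariant m) ∧
    (∃ e : {r : SPLattice G B // IsCross r ∧ GInvariant r} → RhSPC G B,
      Function.Bijective e ∧
        ∀ x y : {r : SPLattice G B // IsCross r ∧ GInvariant r},
          x.1 ≤ y.1 ↔ rhLe (e x) (e y)) := by
  refine ⟨fun r s => ⟨r ⊓ s, isGLB_pair⟩, ?_, ?_⟩
  · intro r s m hcr hir _ his hm
    obtain rfl : m = r ⊓ s := hm.unique isGLB_pair
    exact ⟨hcr.inf s, hir.inf his⟩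
  · refine ⟨SPLattice.invariantCrossSectionEquiv, SPLattice.invariantCrossSectionEquiv.bijective,
      fun x y => ?_⟩
    rw [← RhSPC.toSP_le_toSP_iff, SPLattice.toSP_invariantCrossSectionEquiv,
      SPLattice.toSP_invariantCrossSectionEquiv]

/-- The set `CS(G × B)` of invariant cross-sections is a meet-subsemilattice of
the set-partition lattice `SP(G × B)` (binary meets exist in `SP(G × B)` and
meets of invariant cross-sections are invariant cross-sections), and it is
isomorphic as a (meet-semi)lattice to the Rhodes lattice `Rh_B(G)` with the
contradiction removed: there is an order-isomorphism between them. -/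
theorem invariant_cross_sections_meet_subsemilattice_iso_Rhodes
    (G B : Type*) [Group G] [Fintype G] [Fintype B] :
    (∀ r s : SPLattice G B, ∃ m : SPLattice G B, IsGLB {r, s} m) ∧
    (∀ r s m : SPLattice G B, IsCross r → GInvariant r → IsCross s →
      GInvariant s → IsGLB {r, s} m → IsCross m ∧ GInvariant m) ∧
    (∃ e : {r : SPLattice G B // IsCross r ∧ GInvariant r} → RhSPC G B,
      Function.Bijective e ∧
        ∀ x y : {r : SPLattice G B // IsCross r ∧ GInvariant r},
          x.1 ≤ y.1 ↔ rhLe (e x) (e y)) :=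
  invariant_cross_sections_meet_subsemilattice_iso_Rhodes_general G B
end

section
/- For a transformation semigroup (Q, S) by partial functions, the intersection of any family of injective congruences on Q is an injective congruence; consequently there is a unique minimal injective congruence on (Q, S). -/
/-- `r` is an injective congruence on the transformation semigroup `(Q, S)` of
partial functions: an equivalence relation on `Q` compatible with the action
(`q ≈ q'` and both images defined implies images equivalent) such that every
`s ∈ S` acts as an injective partial function on the quotient `Q/≈`. -/
def InjCong {Q : Type*} (S : Set (Q → Option Q)) (r : Q → Q → Prop) : Prop :=
  Equivalence r ∧
  (∀ s ∈ S, ∀ q q' a b, r q q' → s q = some a → s q' = some b → r a b) ∧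
  (∀ s ∈ S, ∀ q q' a b, s q = some a → s q' = some b → r a b → r q q')

namespace InjCong

variable {Q : Type*} {S : Set (Q → Option Q)}

theorem iInter {ι : Sort*} {r : ι → Q → Q → Prop} (hr : ∀ i, InjCong S (r i)) :
    InjCong S (fun q q' => ∀ i, r i q q') :=
  ⟨⟨fun q i => (hr i).1.refl q, fun h i => (hr i).1.symm (h i),
      fun h h' i => (hr i).1.trans (h i) (h' i)⟩,
    fun s hs q q' a b h ha hb i => (hr i).2.1 s hs q q' a b (h i) ha hb,
    fun s hs q q' a b ha hb h i => (hr i).2.2 s hs q q' a b ha hb (h i)⟩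

variable (S) in
def minimal : Q → Q → Prop :=
  fun q q' => ∀ r : {r // InjCong S r}, r.1 q q'

theorem isLeast_minimal : IsLeast {r | InjCong S r} (minimal S) :=
  ⟨iInter fun r => r.2, fun r hr _ _ h => h ⟨r, hr⟩⟩

end InjCong

theorem minimal_injective_congruence_general
    (Q : Type*) (S : Set (Q → Option Q)) :
    (∀ (ι : Type) (r : ι → Q → Q → Prop), (∀ i, InjCong S (r i)) →
      InjCong S (fun q q' => ∀ i, r i q q')) ∧
    (∃ m : Q → Q → Prop, InjCong S m ∧
      (∀ r : Q → Q → Prop, InjCong S r → ∀ q q', m q q' → r q q') ∧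
      (∀ m' : Q → Q → Prop, InjCong S m' →
        (∀ r : Q → Q → Prop, InjCong S r → ∀ q q', m' q q' → r q q') →
        m' = m)) :=
  ⟨fun _ _ => InjCong.iInter,
    ⟨InjCong.minimal S, InjCong.isLeast_minimal.1, fun _ hr => InjCong.isLeast_minimal.2 hr,
      fun _ hm' hmin' => IsLeast.unique ⟨hm', fun r hr => hmin' r hr⟩ InjCong.isLeast_minimal⟩⟩

/-- For a transformation semigroup `(Q, S)` by partial functions on a finite
set, the intersection of any family of injective congruences is an injective
congruence; consequently there is a unique minimal injective congruence. -/
theorem minimal_injective_congruence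
    (Q : Type*) [Fintype Q] (S : Set (Q → Option Q)) :
    (∀ (ι : Type) (r : ι → Q → Q → Prop), (∀ i, InjCong S (r i)) →
      InjCong S (fun q q' => ∀ i, r i q q')) ∧
    (∃ m : Q → Q → Prop, InjCong S m ∧
      (∀ r : Q → Q → Prop, InjCong S r → ∀ q q', m q q' → r q q') ∧
      (∀ m' : Q → Q → Prop, InjCong S m' →
        (∀ r : Q → Q → Prop, InjCong S r → ∀ q q', m' q q' → r q q') →
        m' = m)) :=
  minimal_injective_congruence_general Q S
end
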